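/- arXiv:2206.09107 — 3 statements merged into one kernel-verified Lean document; each statement's English description precedes it below -/
import Mathlib

section
/- Let L be a finite nonempty set and let T be a family of nonempty subsets of L such that L ∈ T, every singleton {x} (x ∈ L) belongs to T, and T is laminar. Let β : L → ℝ. Among all aggregation sets B ⊆ T on which β is blockwise constant (i.e., β is constant on each member of B), there exists a unique coarsest one B*: B* is an aggregation set, β is constant on each member of B*, and every aggregation set B on which β is blockwise constant refines B*, meaning each member of B is contained in some member of B*. -/
open Finset

/-- Let `L` be a finite nonempty set (here a finite nonempty type `α`) and `T` a laminar
family of nonempty subsets of `L` containing `L` itself and all singletons.  For any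
`β : L → ℝ`, among all aggregation sets `B ⊆ T` (partitions of `L` into members of `T`)
on which `β` is blockwise constant, there is a unique coarsest one `B*`: every such
aggregation set refines `B*`. -/
theorem exists_unique_coarsest_aggregation_set
    {α : Type*} [Fintype α] [DecidableEq α] [Nonempty α]
    (T : Finset (Finset α))
    (hTne : ∀ A ∈ T, A.Nonempty)
    (hTtop : (Finset.univ : Finset α) ∈ T)
    (hTsing : ∀ x : α, ({x} : Finset α) ∈ T)
    (hTlam : ∀ A ∈ T, ∀ B ∈ T, A ∩ B = ∅ ∨ A ⊆ B ∨ B ⊆ A)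
    (β : α → ℝ) :
    ∃! Bstar : Finset (Finset α),
      (Bstar ⊆ T
        ∧ (∀ A ∈ Bstar, ∀ A' ∈ Bstar, A ≠ A' → A ∩ A' = ∅)
        ∧ Bstar.biUnion id = Finset.univ
        ∧ (∀ A ∈ Bstar, ∀ x ∈ A, ∀ y ∈ A, β x = β y))
      ∧ ∀ B : Finset (Finset α), B ⊆ T →
          (∀ A ∈ B, ∀ A' ∈ B, A ≠ A' → A ∩ A' = ∅) →
          B.biUnion id = Finset.univ →
          (∀ A ∈ B, ∀ x ∈ A, ∀ y ∈ A, β x = β y) →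
          ∀ A ∈ B, ∃ C ∈ Bstar, A ⊆ C := by
  classical
  -- For each x, take the maximal set in T containing x on which β is constant.
  have hex : ∀ x : α, ∃ M : Finset α,
      (M ∈ T ∧ x ∈ M ∧ ∀ a ∈ M, ∀ b ∈ M, β a = β b) ∧
      ∀ A ∈ T, x ∈ A → (∀ a ∈ A, ∀ b ∈ A, β a = β b) → A ⊆ M := by
    intro x
    set S : Finset (Finset α) :=
      T.filter (fun A => x ∈ A ∧ ∀ a ∈ A, ∀ b ∈ A, β a = β b) with hS
    have hSne : S.Nonempty := by
      refine ⟨{x}, ?_⟩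
      simp [hS, hTsing x]
    obtain ⟨M, hMS, hMmax⟩ := S.exists_max_image Finset.card hSne
    simp only [hS, Finset.mem_filter] at hMS
    refine ⟨M, ⟨hMS.1, hMS.2.1, hMS.2.2⟩, ?_⟩
    intro A hA hxA hAconst
    have hAS : A ∈ S := Finset.mem_filter.mpr ⟨hA, hxA, hAconst⟩
    have hcard := hMmax A hAS
    rcases hTlam A hA M hMS.1 with h | h | h
    · exfalso
      have : x ∈ A ∩ M := Finset.mem_inter.mpr ⟨hxA, hMS.2.1⟩
      simp [h] at this
    · exact h
    · exact (Finset.eq_of_subset_of_card_le h hcard).superset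
  choose M hM hMmax using hex
  set Bstar : Finset (Finset α) := Finset.image M Finset.univ with hBstar
  have hmem : ∀ C ∈ Bstar, ∃ x, M x = C := by
    intro C hC
    simp only [hBstar, Finset.mem_image, Finset.mem_univ, true_and] at hC
    exact hC
  -- disjointness: if M x ≠ M y they are disjoint
  have hdisj : ∀ x y : α, M x ≠ M y → M x ∩ M y = ∅ := by
    intro x y hne
    by_contra h
    obtain ⟨z, hz⟩ := Finset.nonempty_iff_ne_empty.mpr h
    rw [Finset.mem_inter] at hz
    have hsub : ∀ u v : α, M u ⊆ M v → M u = M v := by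
      intro u v huv
      have : M v ⊆ M u :=
        hMmax u (M v) (hM v).1 (huv (hM u).2.1) (hM v).2.2
      exact Finset.Subset.antisymm huv this
    rcases hTlam (M x) (hM x).1 (M y) (hM y).1 with h' | h' | h'
    · exact h h'
    · exact hne (hsub x y h')
    · exact hne ((hsub y x h').symm)
  have hPstar : (Bstar ⊆ T
        ∧ (∀ A ∈ Bstar, ∀ A' ∈ Bstar, A ≠ A' → A ∩ A' = ∅)
        ∧ Bstar.biUnion id = Finset.univ
        ∧ (∀ A ∈ Bstar, ∀ x ∈ A, ∀ y ∈ A, β x = β y)) := by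
    refine ⟨?_, ?_, ?_, ?_⟩
    · intro C hC; obtain ⟨x, rfl⟩ := hmem C hC; exact (hM x).1
    · intro A hA A' hA' hne
      obtain ⟨x, rfl⟩ := hmem A hA
      obtain ⟨y, rfl⟩ := hmem A' hA'
      exact hdisj x y hne
    · apply Finset.eq_univ_of_forall
      intro x
      exact Finset.mem_biUnion.mpr ⟨M x, Finset.mem_image_of_mem M (Finset.mem_univ x), (hM x).2.1⟩
    · intro A hA; obtain ⟨x, rfl⟩ := hmem A hA; exact (hM x).2.2
  have hcoarse : ∀ B : Finset (Finset α), B ⊆ T →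
          (∀ A ∈ B, ∀ A' ∈ B, A ≠ A' → A ∩ A' = ∅) →
          B.biUnion id = Finset.univ →
          (∀ A ∈ B, ∀ x ∈ A, ∀ y ∈ A, β x = β y) →
          ∀ A ∈ B, ∃ C ∈ Bstar, A ⊆ C := by
    intro B hBT _ _ hBconst A hAB
    obtain ⟨x, hx⟩ := hTne A (hBT hAB)
    exact ⟨M x, Finset.mem_image_of_mem M (Finset.mem_univ x),
      hMmax x A (hBT hAB) hx (hBconst A hAB)⟩
  refine ⟨Bstar, ⟨hPstar, hcoarse⟩, ?_⟩
  -- uniqueness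
  rintro B' ⟨⟨hB'T, hB'disj, hB'cov, hB'const⟩, hB'coarse⟩
  -- B' refines Bstar and Bstar refines B'
  have h1 : ∀ A ∈ B', ∃ C ∈ Bstar, A ⊆ C := hcoarse B' hB'T hB'disj hB'cov hB'const
  have h2 : ∀ A ∈ Bstar, ∃ C ∈ B', A ⊆ C :=
    hB'coarse Bstar hPstar.1 hPstar.2.1 hPstar.2.2.1 hPstar.2.2.2
  -- mutual refinement of partitions → equality
  have key : ∀ (P Q : Finset (Finset α)), Q ⊆ T →
      (∀ A ∈ Q, ∀ A' ∈ Q, A ≠ A' → A ∩ A' = ∅) →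
      (∀ A ∈ Q, ∃ C ∈ P, A ⊆ C) → (∀ A ∈ P, ∃ C ∈ Q, A ⊆ C) →
      Q ⊆ P := by
    intro P Q hQT hQdisj hQP hPQ A hAQ
    obtain ⟨C, hCP, hAC⟩ := hQP A hAQ
    obtain ⟨A', hA'Q, hCA'⟩ := hPQ C hCP
    obtain ⟨x, hx⟩ := hTne A (hQT hAQ)
    have hAA' : A = A' := by
      by_contra hne
      have := hQdisj A hAQ A' hA'Q hne
      have hxm : x ∈ A ∩ A' := Finset.mem_inter.mpr ⟨hx, hCA' (hAC hx)⟩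
      simp [this] at hxm
    have : A = C := Finset.Subset.antisymm hAC (hAA' ▸ hCA')
    exact this ▸ hCP
  have hsub1 : Bstar ⊆ B' := key B' Bstar hPstar.1 hPstar.2.1 h2 h1
  have hsub2 : B' ⊆ Bstar := key Bstar B' hB'T hB'disj h1 h2
  exact Finset.Subset.antisymm hsub2 hsub1
end

section
/- Let n ≥ 1, σ > 0, k ≥ 1, p ≥ 2, and let ε ∈ ℝ^n be a random vector with i.i.d. N(0, σ²) entries. Let G be a finite index set with |G| ≤ p, and for each g ∈ G let X_g ∈ ℝ^{n×m_g} be a matrix all of whose entries are in {0,1} and which has at most p_g nonzero columns, where 1 ≤ p_g ≤ 2^k − 1. Then P( max_{g∈G} (1/n) √((2^k − 1)/p_g) ‖X_gᵀ ε‖ > 2 √(2(2^k − 1)) σ √(2 log p / n) ) < 1/p. -/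
/-!
After squaring, the event for the group `g` reads `Q_g > 16 σ² n p_g log p` with
`Q_g = ‖X_gᵀ ε‖²`. For a column `v`, `vᵀ ε ~ N(0, σ² ‖v‖²)`, hence
`E exp (a (vᵀ ε)²) = (1 - 2 a σ² ‖v‖²)^(-1/2)`; Jensen's inequality for `exp`, with weights
`‖v_j‖² / ‖X_g‖_F²` over the columns, gives `E exp (λ Q_g) ≤ (1 - 2 λ σ² ‖X_g‖_F²)^(-1/2)`.
A `{0,1}` matrix with at most `p_g` nonzero columns has `‖X_g‖_F² ≤ p_g n`, so the Chernoff bound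
with `λ = 1 / (4 σ² p_g n)` bounds the probability of each group's event by `√2 p⁻⁴`, and the
union bound over at most `p` groups gives `√2 p⁻³ < p⁻¹`.
-/

open Finset MeasureTheory ProbabilityTheory Real
open scoped ENNReal NNReal

lemma gaussianPDFReal_mul_exp_mul_sq {s : ℝ≥0} (hs : s ≠ 0) {a : ℝ} (h : 2 * a * s < 1) (x : ℝ) :
    gaussianPDFReal 0 s x * rexp (a * x ^ 2)
      = (√(1 - 2 * a * s))⁻¹ * gaussianPDFReal 0 (s / (1 - 2 * a * s)).toNNReal x := by
  have hs' : (0 : ℝ) < s := by positivity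
  have hc : 0 < 1 - 2 * a * s := by linarith
  simp only [gaussianPDFReal, Real.coe_toNNReal _ (div_pos hs' hc).le, sub_zero]
  have hexp : -x ^ 2 / (2 * s) + a * x ^ 2 = -x ^ 2 / (2 * (s / (1 - 2 * a * s))) := by
    field_simp
    ring
  rw [mul_div_assoc', Real.sqrt_div' _ hc.le, mul_assoc, ← Real.exp_add, hexp]
  field_simp
  exact (div_self (Real.sqrt_pos.2 (by linarith)).ne').symm

lemma lintegral_exp_mul_sq_gaussianReal {s : ℝ≥0} {a : ℝ} (h : 2 * a * s < 1) :
    ∫⁻ x, ENNReal.ofReal (rexp (a * x ^ 2)) ∂gaussianReal 0 s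
      = ENNReal.ofReal (√(1 - 2 * a * s))⁻¹ := by
  rcases eq_or_ne s 0 with rfl | hs
  · simp
  rw [gaussianReal_of_var_ne_zero 0 hs,
    lintegral_withDensity_eq_lintegral_mul _ (measurable_gaussianPDF 0 s) (by fun_prop)]
  simp_rw [Pi.mul_apply, gaussianPDF, ← ENNReal.ofReal_mul (gaussianPDFReal_nonneg _ _ _),
    gaussianPDFReal_mul_exp_mul_sq hs h, ENNReal.ofReal_mul (inv_nonneg.2 (Real.sqrt_nonneg _))]
  rw [lintegral_const_mul _ (by fun_prop), lintegral_gaussianPDFReal_eq_one, mul_one]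
  have hc : 0 < 1 - 2 * a * s := by linarith
  simp only [ne_eq, Real.toNNReal_eq_zero, not_le]
  positivity

lemma map_pi_gaussianReal_sum_mul {ι : Type*} [Fintype ι] (s : ℝ≥0) (v : ι → ℝ) :
    (Measure.pi fun _ : ι => gaussianReal 0 s).map (fun x => ∑ i, v i * x i)
      = gaussianReal 0 (∑ i, v i ^ 2 * s).toNNReal := by
  set μ := Measure.pi fun _ : ι => gaussianReal 0 s
  have hlaw : ∀ i,
      μ.map (fun x => v i * x i) = gaussianReal 0 (.mk (v i ^ 2) (sq_nonneg _) * s) := by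
    intro i
    change μ.map ((v i * ·) ∘ Function.eval i) = _
    rw [← Measure.map_map (by fun_prop) (by fun_prop),
      (measurePreserving_eval _ i).map_eq, gaussianReal_map_const_mul, mul_zero]
  have hgauss : ∀ i, HasGaussianLaw (fun x => v i * x i) μ := fun i =>
    ⟨by rw [hlaw i]; infer_instance⟩
  have hindep : iIndepFun (fun i x => v i * x i) μ :=
    iIndepFun_pi (X := fun i y => v i * y) fun i => by fun_prop
  rw [(hindep.hasGaussianLaw_fun_sum hgauss).map_eq_gaussianReal]
  congr 1
  · rw [integral_finsetSum _ fun i _ => (hgauss i).integrable]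
    refine Finset.sum_eq_zero fun i _ => ?_
    have h := integral_id_gaussianReal (μ := 0) (v := .mk (v i ^ 2) (sq_nonneg _) * s)
    rwa [← hlaw i,
      integral_map (f := fun y => y) (hgauss i).aemeasurable aestronglyMeasurable_id] at h
  · congr 1
    rw [← Finset.sum_fn, IndepFun.variance_sum (fun i _ => (hgauss i).memLp_two)
      fun i _ j _ hij => hindep.indepFun hij]
    refine Finset.sum_congr rfl fun i _ => ?_
    rw [← variance_id_map (hgauss i).aemeasurable, hlaw i, variance_id_gaussianReal]
    rfl

lemma lintegral_exp_mul_sq_sum_mul_pi_gaussianReal {ι : Type*} [Fintype ι] (s : ℝ≥0)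
    (v : ι → ℝ) {a : ℝ} (h : 2 * a * (s * ∑ i, v i ^ 2) < 1) :
    ∫⁻ x, ENNReal.ofReal (rexp (a * (∑ i, v i * x i) ^ 2))
        ∂(Measure.pi fun _ : ι => gaussianReal 0 s)
      = ENNReal.ofReal (√(1 - 2 * a * (s * ∑ i, v i ^ 2)))⁻¹ := by
  have hvar : ((∑ i, v i ^ 2 * s).toNNReal : ℝ) = s * ∑ i, v i ^ 2 := by
    rw [Real.coe_toNNReal _ (by positivity), Finset.mul_sum]
    simp only [mul_comm]
  rw [← lintegral_map (f := fun y => ENNReal.ofReal (rexp (a * y ^ 2))) (by fun_prop)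
    (by fun_prop), map_pi_gaussianReal_sum_mul, lintegral_exp_mul_sq_gaussianReal (by rwa [hvar]),
    hvar]

lemma lintegral_exp_sum_mul_le {α κ : Type*} [MeasurableSpace α] [Fintype κ] (μ : Measure α)
    {w : κ → ℝ} (hw₀ : ∀ j, 0 ≤ w j) (hw₁ : ∑ j, w j = 1) {f : κ → α → ℝ}
    (hf : ∀ j, Measurable (f j)) :
    ∫⁻ x, ENNReal.ofReal (rexp (∑ j, w j * f j x)) ∂μ
      ≤ ∑ j, ENNReal.ofReal (w j) * ∫⁻ x, ENNReal.ofReal (rexp (f j x)) ∂μ := by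
  calc ∫⁻ x, ENNReal.ofReal (rexp (∑ j, w j * f j x)) ∂μ
      ≤ ∫⁻ x, ∑ j, ENNReal.ofReal (w j) * ENNReal.ofReal (rexp (f j x)) ∂μ := by
        refine lintegral_mono fun x => ?_
        have hjensen := convexOn_exp.map_sum_le (t := Finset.univ) (fun j _ => hw₀ j) hw₁
          (p := fun j => f j x) fun _ _ => Set.mem_univ _
        simp only [smul_eq_mul] at hjensen
        simp_rw [← ENNReal.ofReal_mul (hw₀ _)]
        rw [← ENNReal.ofReal_sum_of_nonneg fun j _ => mul_nonneg (hw₀ j) (exp_nonneg _)]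
        exact ENNReal.ofReal_le_ofReal hjensen
    _ = _ := by
        rw [lintegral_finsetSum _ fun j _ => ((hf j).exp.ennreal_ofReal).const_mul _]
        exact Finset.sum_congr rfl fun j _ => lintegral_const_mul _ (hf j).exp.ennreal_ofReal

lemma sum_mul_eq_zero_of_sum_sq_eq_zero {ι : Type*} [Fintype ι] {v : ι → ℝ}
    (hv : ∑ i, v i ^ 2 = 0) (x : ι → ℝ) : ∑ i, v i * x i = 0 := by
  have hv0 : ∀ i, v i = 0 := fun i =>
    pow_eq_zero_iff two_ne_zero |>.1 <| (Finset.sum_eq_zero_iff_of_nonneg fun i _ =>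
      sq_nonneg (v i)).1 hv i (Finset.mem_univ i)
  simp [hv0]

lemma lintegral_exp_mul_sum_sq_le {ι κ : Type*} [Fintype ι] [Fintype κ] (s : ℝ≥0)
    (A : ι → κ → ℝ) {t : ℝ} (h : 2 * t * (s * ∑ j, ∑ i, A i j ^ 2) < 1) :
    ∫⁻ x, ENNReal.ofReal (rexp (t * ∑ j, (∑ i, A i j * x i) ^ 2))
        ∂(Measure.pi fun _ : ι => gaussianReal 0 s)
      ≤ ENNReal.ofReal (√(1 - 2 * t * (s * ∑ j, ∑ i, A i j ^ 2)))⁻¹ := by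
  set T := ∑ j, ∑ i, A i j ^ 2
  set c := ENNReal.ofReal (√(1 - 2 * t * (s * T)))⁻¹
  rcases (show 0 ≤ T by positivity).eq_or_lt with hT | hT
  · have hcol : ∀ j, ∑ i, A i j ^ 2 = 0 := fun j =>
      (Finset.sum_eq_zero_iff_of_nonneg fun j _ => by positivity).1 hT.symm j (Finset.mem_univ j)
    simp [sum_mul_eq_zero_of_sum_sq_eq_zero (hcol _), c, ← hT]
  set w : κ → ℝ := fun j => (∑ i, A i j ^ 2) / T
  have hw₁ : ∑ j, w j = 1 := by rw [← Finset.sum_div, div_self hT.ne']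
  -- A zero column has weight `0` (and `t / 0 = 0`), so it contributes `0` on both sides.
  have hsplit : ∀ x : ι → ℝ, t * ∑ j, (∑ i, A i j * x i) ^ 2
      = ∑ j, w j * (t / w j * (∑ i, A i j * x i) ^ 2) := by
    intro x
    rw [Finset.mul_sum]
    refine Finset.sum_congr rfl fun j _ => ?_
    rcases eq_or_ne (∑ i, A i j ^ 2) 0 with hj | hj
    · simp [sum_mul_eq_zero_of_sum_sq_eq_zero hj]
    · have : w j ≠ 0 := div_ne_zero hj hT.ne'
      field_simp
  have hterm : ∀ j, ENNReal.ofReal (w j) * ∫⁻ x, ENNReal.ofReal (rexp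
      (t / w j * (∑ i, A i j * x i) ^ 2)) ∂(Measure.pi fun _ : ι => gaussianReal 0 s)
      = ENNReal.ofReal (w j) * c := by
    intro j
    rcases eq_or_ne (∑ i, A i j ^ 2) 0 with hj | hj
    · simp [w, hj]
    have hvar : t / w j * (s * ∑ i, A i j ^ 2) = t * (s * T) := by
      simp only [w]
      field_simp
    rw [lintegral_exp_mul_sq_sum_mul_pi_gaussianReal s _ (by rwa [mul_assoc, hvar, ← mul_assoc]),
      mul_assoc, hvar, ← mul_assoc]
  calc _ = ∫⁻ x, ENNReal.ofReal (rexp (∑ j, w j * (t / w j * (∑ i, A i j * x i) ^ 2)))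
        ∂(Measure.pi fun _ : ι => gaussianReal 0 s) := by simp_rw [hsplit]
    _ ≤ _ := lintegral_exp_sum_mul_le _ (fun j => by positivity) hw₁ fun j => by fun_prop
    _ = c := by
      rw [Finset.sum_congr rfl fun j _ => hterm j, ← Finset.sum_mul,
        ← ENNReal.ofReal_sum_of_nonneg fun j _ => by positivity, hw₁, ENNReal.ofReal_one, one_mul]

lemma measure_lt_le_exp_mul_lintegral {α : Type*} [MeasurableSpace α] (μ : Measure α)
    {f : α → ℝ} (hf : AEMeasurable f μ) {t : ℝ} (ht : 0 ≤ t) (c : ℝ) :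
    μ {x | c < f x}
      ≤ ENNReal.ofReal (rexp (-(t * c))) * ∫⁻ x, ENNReal.ofReal (rexp (t * f x)) ∂μ := by
  have hsub : {x | c < f x}
      ⊆ {x | ENNReal.ofReal (rexp (t * c)) ≤ ENNReal.ofReal (rexp (t * f x))} := fun x hx =>
    ENNReal.ofReal_le_ofReal (exp_le_exp.2 (mul_le_mul_of_nonneg_left (le_of_lt hx) ht))
  calc μ {x | c < f x}
      = ENNReal.ofReal (rexp (-(t * c))) * (ENNReal.ofReal (rexp (t * c)) * μ {x | c < f x}) := by
        rw [← mul_assoc, ← ENNReal.ofReal_mul (exp_nonneg _), ← exp_add, neg_add_cancel, exp_zero,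
          ENNReal.ofReal_one, one_mul]
    _ ≤ ENNReal.ofReal (rexp (-(t * c))) * (ENNReal.ofReal (rexp (t * c))
          * μ {x | ENNReal.ofReal (rexp (t * c)) ≤ ENNReal.ofReal (rexp (t * f x))}) := by
        gcongr
    _ ≤ _ := by
        gcongr
        exact mul_meas_ge_le_lintegral₀ (by fun_prop) _

lemma pi_gaussianReal_sum_sq_tail {ι κ : Type*} [Fintype ι] [Fintype κ] (s : ℝ≥0)
    (A : ι → κ → ℝ) {B : ℝ} (hB : 0 < B) (hAB : s * ∑ j, ∑ i, A i j ^ 2 ≤ B) (L : ℝ) :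
    (Measure.pi fun _ : ι => gaussianReal 0 s) {x | 4 * B * L < ∑ j, (∑ i, A i j * x i) ^ 2}
      ≤ ENNReal.ofReal (√2 * rexp (-L)) := by
  set t := 1 / (4 * B)
  have htT : 2 * t * (s * ∑ j, ∑ i, A i j ^ 2) ≤ 1 / 2 := by
    simp only [t]
    rw [show 2 * (1 / (4 * B)) * (s * ∑ j, ∑ i, A i j ^ 2) = (s * ∑ j, ∑ i, A i j ^ 2) / (2 * B)
      by ring, div_le_iff₀ (by positivity)]
    linarith
  have hmgf : (√(1 - 2 * t * (s * ∑ j, ∑ i, A i j ^ 2)))⁻¹ ≤ √2 := by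
    rw [inv_le_comm₀ (Real.sqrt_pos.2 (by linarith)) (by positivity), ← Real.sqrt_inv]
    exact Real.sqrt_le_sqrt (by linarith)
  calc _ ≤ ENNReal.ofReal (rexp (-(t * (4 * B * L))))
        * ∫⁻ x, ENNReal.ofReal (rexp (t * ∑ j, (∑ i, A i j * x i) ^ 2))
          ∂(Measure.pi fun _ : ι => gaussianReal 0 s) :=
        measure_lt_le_exp_mul_lintegral _ (by fun_prop : Measurable _).aemeasurable
          (by positivity) _
    _ ≤ ENNReal.ofReal (rexp (-L)) * ENNReal.ofReal (√2) := by
        rw [show t * (4 * B * L) = L by simp only [t]; field_simp]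
        gcongr
        exact (lintegral_exp_mul_sum_sq_le s A (by linarith)).trans (ENNReal.ofReal_le_ofReal hmgf)
    _ = ENNReal.ofReal (√2 * rexp (-L)) := by
        rw [← ENNReal.ofReal_mul (exp_nonneg _), mul_comm]

lemma sum_sum_sq_le_card_nonzero_columns_mul {ι κ : Type*} [Fintype ι] [Fintype κ]
    (A : ι → κ → ℝ) (hA : ∀ i j, |A i j| ≤ 1) :
    ∑ j, ∑ i, A i j ^ 2
      ≤ (Finset.univ.filter fun j : κ => (fun i => A i j) ≠ 0).card * Fintype.card ι := by
  have hcol : ∀ j, ∑ i, A i j ^ 2 ≤ Fintype.card ι := fun j => calc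
    ∑ i, A i j ^ 2 ≤ ∑ _i : ι, (1 : ℝ) :=
      Finset.sum_le_sum fun i _ => (sq_le_one_iff_abs_le_one (A i j)).2 (hA i j)
    _ = Fintype.card ι := by simp
  calc ∑ j, ∑ i, A i j ^ 2
      = ∑ j ∈ Finset.univ.filter fun j : κ => (fun i => A i j) ≠ 0, ∑ i, A i j ^ 2 := by
        refine (Finset.sum_filter_of_ne (p := fun j : κ => (fun i => A i j) ≠ 0)
          fun j _ hj hzero => hj ?_).symm
        simp [fun i => congrFun hzero i]
    _ ≤ _ := by
        simpa using Finset.sum_le_sum fun j (_ : j ∈ Finset.univ.filter _) => hcol j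

lemma sixteen_mul_lt_of_mul_sqrt_lt {n q r L σ Q : ℝ} (hn : 0 < n) (hq : 0 < q) (hr : 0 ≤ r)
    (hL : 0 ≤ L) (hσ : 0 ≤ σ) (hQ : 0 ≤ Q)
    (h : 2 * √(2 * r) * σ * √(2 * L / n) < 1 / n * √(r / q) * √Q) :
    16 * σ ^ 2 * n * q * L < Q := by
  have hsq := pow_lt_pow_left₀ h (by positivity) two_ne_zero
  rw [mul_pow, mul_pow, mul_pow, mul_pow, mul_pow, div_pow, Real.sq_sqrt (by positivity),
    Real.sq_sqrt (by positivity), Real.sq_sqrt (by positivity), Real.sq_sqrt hQ] at hsq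
  refine lt_of_mul_lt_mul_left (a := r) ?_ hr
  field_simp at hsq
  nlinarith

lemma mul_sqrt_two_mul_exp_neg_four_mul_log_lt_inv {p : ℝ} (hp : 2 ≤ p) :
    p * (√2 * rexp (-(4 * log p))) < p⁻¹ := by
  rw [exp_neg, show 4 * log p = log (p ^ 4) by rw [Real.log_pow]; norm_num,
    exp_log (by positivity)]
  have hsqrt : √2 < 2 := by nlinarith [Real.sq_sqrt (zero_le_two : (0 : ℝ) ≤ 2), Real.sqrt_nonneg 2]
  rw [← sub_pos]
  field_simp
  nlinarith

theorem grouped_binary_matrix_gaussian_union_bound_general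
    (n p k : ℕ) (hn : 1 ≤ n) (hp : 2 ≤ p) (σ : ℝ) (hσ : 0 < σ)
    {Ωs : Type*} [MeasurableSpace Ωs] (P : Measure Ωs) [IsProbabilityMeasure P]
    (ε : Ωs → Fin n → ℝ) (hmeas : Measurable ε)
    (hlaw : Measure.map ε P
      = Measure.pi fun _ : Fin n => gaussianReal 0 ⟨σ ^ 2, sq_nonneg σ⟩)
    (G : Type*) [Fintype G] (hG : Fintype.card G ≤ p)
    (mg : G → ℕ) (pg : G → ℕ) (hpg1 : ∀ g, 1 ≤ pg g)
    (X : (g : G) → Matrix (Fin n) (Fin (mg g)) ℝ)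
    (hX01 : ∀ g, ∀ i j, X g i j = 0 ∨ X g i j = 1)
    (hcols : ∀ g,
      (Finset.univ.filter fun j : Fin (mg g) => (fun i => X g i j) ≠ 0).card ≤ pg g) :
    P {ω | ∃ g : G,
          (1 / (n : ℝ)) * Real.sqrt (((2 ^ k - 1 : ℝ)) / pg g)
              * Real.sqrt (∑ j, (∑ i, X g i j * ε ω i) ^ 2)
            > 2 * Real.sqrt (2 * (2 ^ k - 1 : ℝ)) * σ * Real.sqrt (2 * Real.log p / n)}
      < 1 / (p : ℝ≥0∞) := by
  have hn₀ : (0 : ℝ) < n := by exact_mod_cast hn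
  have hpg : ∀ g, (0 : ℝ) < pg g := fun g => by exact_mod_cast hpg1 g
  set L := 4 * Real.log p
  set E : G → Set (Fin n → ℝ) := fun g =>
    {x | 4 * (σ ^ 2 * (pg g * n)) * L < ∑ j, (∑ i, X g i j * x i) ^ 2}
  have htail : ∀ g, (Measure.pi fun _ : Fin n => gaussianReal 0 ⟨σ ^ 2, sq_nonneg σ⟩) (E g)
      ≤ ENNReal.ofReal (√2 * rexp (-L)) := fun g => by
    refine pi_gaussianReal_sum_sq_tail ⟨σ ^ 2, sq_nonneg σ⟩ (X g)
      (mul_pos (pow_pos hσ 2) (mul_pos (hpg g) hn₀))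
      (mul_le_mul_of_nonneg_left ((sum_sum_sq_le_card_nonzero_columns_mul _ fun i j => ?_).trans ?_)
        (sq_nonneg σ)) L
    · rcases hX01 g i j with h | h <;> simp [h]
    · simpa using mul_le_mul_of_nonneg_right (Nat.cast_le.2 (hcols g)) hn₀.le
  calc _ ≤ P (ε ⁻¹' ⋃ g, E g) := by
        refine measure_mono fun ω ⟨g, hg⟩ => Set.mem_iUnion.2 ⟨g, ?_⟩
        have := sixteen_mul_lt_of_mul_sqrt_lt hn₀ (hpg g) (sub_nonneg.2 (one_le_pow₀ one_le_two))
          (Real.log_nonneg (by exact_mod_cast one_le_two.trans hp)) hσ.le (by positivity) hg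
        simp only [E, L, Set.mem_ofPred_eq]
        linarith
    _ = (Measure.pi fun _ : Fin n => gaussianReal 0 ⟨σ ^ 2, sq_nonneg σ⟩) (⋃ g, E g) := by
        rw [← hlaw, Measure.map_apply hmeas (MeasurableSet.iUnion fun g =>
          measurableSet_lt measurable_const (by fun_prop))]
    _ ≤ Fintype.card G * ENNReal.ofReal (√2 * rexp (-L)) := by
        simpa using (measure_iUnion_fintype_le _ _).trans (Finset.sum_le_sum fun g _ => htail g)
    _ < 1 / (p : ℝ≥0∞) := by
        grw [hG, ← ENNReal.ofReal_natCast, ← ENNReal.ofReal_mul (by positivity), one_div,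
          ← ENNReal.ofReal_inv_of_pos (by positivity)]
        exact (ENNReal.ofReal_lt_ofReal_iff (by positivity)).2
          (mul_sqrt_two_mul_exp_neg_four_mul_log_lt_inv (by exact_mod_cast hp))

/-- Union bound over groups: if `ε ∈ ℝ^n` has i.i.d. `N(0,σ²)` entries, `G` is a finite
index set with `|G| ≤ p` (`p ≥ 2`), and for each `g ∈ G` the matrix `X_g` has `{0,1}`
entries with at most `p_g` nonzero columns, `1 ≤ p_g ≤ 2^k − 1`, then
`P(max_{g∈G} (1/n)√((2^k−1)/p_g)‖X_gᵀε‖ > 2√(2(2^k−1)) σ √(2 log p / n)) < 1/p`. -/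
theorem grouped_binary_matrix_gaussian_union_bound
    (n p k : ℕ) (hn : 1 ≤ n) (hp : 2 ≤ p) (hk : 1 ≤ k) (σ : ℝ) (hσ : 0 < σ)
    {Ωs : Type*} [MeasurableSpace Ωs] (P : Measure Ωs) [IsProbabilityMeasure P]
    (ε : Ωs → Fin n → ℝ) (hmeas : Measurable ε)
    (hlaw : Measure.map ε P
      = Measure.pi fun _ : Fin n => gaussianReal 0 ⟨σ ^ 2, sq_nonneg σ⟩)
    (G : Type*) [Fintype G] (hG : Fintype.card G ≤ p)
    (mg : G → ℕ) (pg : G → ℕ) (hpg1 : ∀ g, 1 ≤ pg g) (hpg2 : ∀ g, pg g ≤ 2 ^ k - 1)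
    (X : (g : G) → Matrix (Fin n) (Fin (mg g)) ℝ)
    (hX01 : ∀ g, ∀ i j, X g i j = 0 ∨ X g i j = 1)
    (hcols : ∀ g,
      (Finset.univ.filter fun j : Fin (mg g) => (fun i => X g i j) ≠ 0).card ≤ pg g) :
    P {ω | ∃ g : G,
          (1 / (n : ℝ)) * Real.sqrt (((2 ^ k - 1 : ℝ)) / pg g)
              * Real.sqrt (∑ j, (∑ i, X g i j * ε ω i) ^ 2)
            > 2 * Real.sqrt (2 * (2 ^ k - 1 : ℝ)) * σ * Real.sqrt (2 * Real.log p / n)}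
      < 1 / (p : ℝ≥0∞) :=
  grouped_binary_matrix_gaussian_union_bound_general n p k hn hp σ hσ P ε hmeas hlaw G hG mg pg hpg1
    X hX01 hcols
end

section
/- Let n ≥ 1, m ≥ 1, y ∈ ℝ^n, let X̃ ∈ ℝ^{n×m}, let G be a partition of {1,…,m} into nonempty groups with weights w_g > 0, let X_g denote the submatrix of X̃ with columns indexed by g, and let λ > 0. Then γ = 0 minimizes the weighted group lasso objective F(γ) = (1/(2n))‖y − X̃γ‖² + λ ∑_{g∈G} w_g ‖γ_g‖ over ℝ^m if and only if λ ≥ max_{g∈G} ‖X_gᵀ y‖ / (n w_g). -/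
open Finset Matrix

/-- Expansion of the squared residual. -/
lemma glasso_expand (n m : ℕ) (y : Fin n → ℝ) (Xt : Matrix (Fin n) (Fin m) ℝ)
    (γ : Fin m → ℝ) :
    ∑ i, (y i - Xt.mulVec γ i) ^ 2
      = ∑ i, y i ^ 2 - 2 * ∑ j, (∑ i, Xt i j * y i) * γ j
        + ∑ i, (Xt.mulVec γ i) ^ 2 := by
  have hswap : ∑ i, y i * Xt.mulVec γ i = ∑ j, (∑ i, Xt i j * y i) * γ j := by
    simp only [Matrix.mulVec, dotProduct, Finset.mul_sum, Finset.sum_mul]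
    rw [Finset.sum_comm]
    exact Finset.sum_congr rfl fun j _ => Finset.sum_congr rfl fun i _ => by ring
  have : ∑ i, (y i - Xt.mulVec γ i) ^ 2
      = ∑ i, (y i ^ 2 - 2 * (y i * Xt.mulVec γ i) + (Xt.mulVec γ i) ^ 2) := by
    exact Finset.sum_congr rfl fun i _ => by ring
  rw [this, Finset.sum_add_distrib, Finset.sum_sub_distrib, ← Finset.mul_sum, hswap]

/-- Zero is the weighted group lasso solution iff the regularization level dominates
the maximal weighted group correlation: for a partition `G` of `{1,…,m}` with positive
weights `w_g`, `γ = 0` minimizes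
`F(γ) = (1/(2n))‖y − X̃γ‖² + λ∑_{g∈G} w_g‖γ_g‖` over `ℝ^m` iff
`λ ≥ max_{g∈G} ‖X_gᵀy‖/(n w_g)`, where `X_g` is the submatrix of `X̃` with columns in `g`. -/
theorem weighted_group_lasso_zero_iff
    (n m : ℕ) (hn : 1 ≤ n) (hm : 1 ≤ m)
    (y : Fin n → ℝ) (Xt : Matrix (Fin n) (Fin m) ℝ)
    (G : Finset (Finset (Fin m)))
    (hGne : ∀ g ∈ G, g.Nonempty)
    (hGdisj : ∀ g ∈ G, ∀ g' ∈ G, g ≠ g' → g ∩ g' = ∅)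
    (hGcover : G.biUnion id = Finset.univ)
    (w : Finset (Fin m) → ℝ) (hw : ∀ g ∈ G, 0 < w g)
    (lam : ℝ) (hlam : 0 < lam) :
    (∀ γ : Fin m → ℝ,
        (1 / (2 * n)) * ∑ i, (y i - Xt.mulVec (0 : Fin m → ℝ) i) ^ 2
            + lam * ∑ g ∈ G, w g * Real.sqrt (∑ j ∈ g, ((0 : Fin m → ℝ) j) ^ 2)
          ≤ (1 / (2 * n)) * ∑ i, (y i - Xt.mulVec γ i) ^ 2
            + lam * ∑ g ∈ G, w g * Real.sqrt (∑ j ∈ g, γ j ^ 2))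
      ↔ lam ≥ G.sup' (by
            have h0 : (⟨0, hm⟩ : Fin m) ∈ G.biUnion id := by
              rw [hGcover]; exact Finset.mem_univ _
            rcases Finset.mem_biUnion.mp h0 with ⟨g, hg, _⟩
            exact ⟨g, hg⟩)
          (fun g => Real.sqrt (∑ j ∈ g, (∑ i, Xt i j * y i) ^ 2) / (n * w g)) := by
  have hn0 : (0 : ℝ) < n := by exact_mod_cast hn
  set c : Fin m → ℝ := fun j => ∑ i, Xt i j * y i with hc
  -- simplify the value at zero
  have hzero1 : ∑ i, (y i - Xt.mulVec (0 : Fin m → ℝ) i) ^ 2 = ∑ i, y i ^ 2 := by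
    simp [Matrix.mulVec_zero]
  have hzero2 : ∑ g ∈ G, w g * Real.sqrt (∑ j ∈ g, ((0 : Fin m → ℝ) j) ^ 2) = 0 := by
    simp
  rw [hzero1, hzero2, mul_zero, add_zero]
  -- rewrite the minimality condition using the expansion
  have hmin_iff : ∀ γ : Fin m → ℝ,
      ((1 / (2 * n)) * ∑ i, y i ^ 2
        ≤ (1 / (2 * n)) * ∑ i, (y i - Xt.mulVec γ i) ^ 2
          + lam * ∑ g ∈ G, w g * Real.sqrt (∑ j ∈ g, γ j ^ 2))
      ↔ (0 ≤ (1 / (2 * n)) * (-(2 * ∑ j, c j * γ j) + ∑ i, (Xt.mulVec γ i) ^ 2)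
          + lam * ∑ g ∈ G, w g * Real.sqrt (∑ j ∈ g, γ j ^ 2)) := by
    intro γ
    rw [glasso_expand]
    constructor <;> intro h <;> nlinarith [h]
  simp only [hmin_iff]
  rw [ge_iff_le, Finset.sup'_le_iff]
  constructor
  · -- minimality implies the bound on each group
    intro hmin g hg
    rw [div_le_iff₀ (mul_pos hn0 (hw g hg))]
    by_contra hlt
    push_neg at hlt
    set N : ℝ := Real.sqrt (∑ j ∈ g, c j ^ 2) with hN
    have hN0 : 0 < N :=
      lt_of_le_of_lt (mul_pos hlam (mul_pos hn0 (hw g hg))).le hlt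
    have hNsq : N ^ 2 = ∑ j ∈ g, c j ^ 2 :=
      Real.sq_sqrt (Finset.sum_nonneg fun j _ => sq_nonneg _)
    set v : Fin m → ℝ := fun j => if j ∈ g then c j else 0 with hv
    set A : ℝ := ∑ i, (Xt.mulVec v i) ^ 2 with hA
    have hA0 : 0 ≤ A := Finset.sum_nonneg fun i _ => sq_nonneg _
    set ε : ℝ := N ^ 2 / n - lam * w g * N with hε
    have hε0 : 0 < ε := by
      have h : lam * w g * N < N ^ 2 / n := by
        rw [lt_div_iff₀ hn0]
        calc lam * w g * N * n = (lam * (n * w g)) * N := by ring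
        _ < N * N := by
            exact mul_lt_mul_of_pos_right hlt hN0
        _ = N ^ 2 := by ring
      rw [hε]
      linarith
    set t : ℝ := min 1 (ε * n / (A + 1)) with ht
    have ht0 : 0 < t := lt_min one_pos (by positivity)
    clear_value N A ε t
    have htA : t * A < 2 * n * ε := by
      have h1 : t * A ≤ (ε * n / (A + 1)) * A :=
        mul_le_mul_of_nonneg_right (by rw [ht]; exact min_le_right _ _) hA0
      have h2 : (ε * n / (A + 1)) * A < 2 * n * ε := by
        rw [div_mul_eq_mul_div, div_lt_iff₀ (by positivity : (0:ℝ) < A + 1)]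
        nlinarith [mul_pos hn0 hε0, mul_nonneg (mul_pos hn0 hε0).le hA0]
      linarith
    -- specialize minimality at γ = t • v
    have key := hmin (t • v)
    have hSv : ∑ j, c j * v j = N ^ 2 := by
      rw [hNsq, hv]
      simp only [mul_ite, mul_zero]
      rw [Finset.sum_ite_mem, Finset.univ_inter]
      exact Finset.sum_congr rfl fun j _ => (sq (c j)).symm ▸ by ring
    have hS : ∑ j, c j * (t • v) j = t * N ^ 2 := by
      simp only [Pi.smul_apply, smul_eq_mul]
      rw [← hSv, Finset.mul_sum]
      exact Finset.sum_congr rfl fun j _ => by ring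
    have hQ : ∑ i, (Xt.mulVec (t • v) i) ^ 2 = t ^ 2 * A := by
      rw [hA, Finset.mul_sum]
      refine Finset.sum_congr rfl fun i _ => ?_
      rw [Matrix.mulVec_smul]
      simp only [Pi.smul_apply, smul_eq_mul]
      ring
    have hP : ∑ g' ∈ G, w g' * Real.sqrt (∑ j ∈ g', ((t • v) j) ^ 2)
        = w g * (t * N) := by
      rw [Finset.sum_eq_single_of_mem g hg]
      · congr 1
        have : ∑ j ∈ g, ((t • v) j) ^ 2 = t ^ 2 * ∑ j ∈ g, c j ^ 2 := by
          rw [Finset.mul_sum]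
          refine Finset.sum_congr rfl fun j hj => ?_
          simp only [Pi.smul_apply, smul_eq_mul, hv, if_pos hj]
          ring
        rw [this, Real.sqrt_mul (sq_nonneg t), Real.sqrt_sq ht0.le, hN]
      · intro g' hg' hne
        have hzero : ∀ j ∈ g', ((t • v) j) ^ 2 = 0 := by
          intro j hj
          have hjg : j ∉ g := by
            intro hjg
            have := hGdisj g hg g' hg' (fun h => hne (h ▸ rfl))
            have : j ∈ g ∩ g' := Finset.mem_inter.mpr ⟨hjg, hj⟩
            simp_all
          simp [hv, hjg]
        rw [Finset.sum_congr rfl hzero]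
        simp
    rw [hS, hQ, hP] at key
    -- derive a contradiction
    have h2n : (0:ℝ) < 2 * n := by positivity
    have hEeq : (1 / (2 * (n:ℝ))) * (-(2 * (t * N ^ 2)) + t ^ 2 * A)
        + lam * (w g * (t * N)) = t * (t * A - 2 * n * ε) / (2 * n) := by
      rw [hε]; field_simp; ring
    have hnum : t * (t * A - 2 * n * ε) < 0 :=
      mul_neg_of_pos_of_neg ht0 (by linarith)
    have hcontr : (1 / (2 * (n:ℝ))) * (-(2 * (t * N ^ 2)) + t ^ 2 * A)
        + lam * (w g * (t * N)) < 0 := by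
      rw [hEeq]
      exact div_neg_of_neg_of_pos hnum h2n
    linarith
  · -- the bound implies minimality
    intro hb γ
    have hb' : ∀ g ∈ G, Real.sqrt (∑ j ∈ g, c j ^ 2) ≤ lam * (n * w g) := by
      intro g hg
      have := hb g hg
      rwa [div_le_iff₀ (mul_pos hn0 (hw g hg))] at this
    -- split the inner product over the partition
    have hdisj : (G : Set (Finset (Fin m))).PairwiseDisjoint id := by
      intro a ha b hb hne
      simp only [Function.onFun, id]
      rw [Finset.disjoint_iff_inter_eq_empty]
      exact hGdisj a (by simpa using ha) b (by simpa using hb) hne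
    have hpart : ∑ j, c j * γ j = ∑ g ∈ G, ∑ j ∈ g, c j * γ j := by
      rw [← hGcover, Finset.sum_biUnion hdisj]
      rfl
    have hCS : ∑ j, c j * γ j
        ≤ lam * n * ∑ g ∈ G, w g * Real.sqrt (∑ j ∈ g, γ j ^ 2) := by
      rw [hpart, Finset.mul_sum]
      refine Finset.sum_le_sum fun g hg => ?_
      calc ∑ j ∈ g, c j * γ j
          ≤ Real.sqrt (∑ j ∈ g, c j ^ 2) * Real.sqrt (∑ j ∈ g, γ j ^ 2) :=
            Real.sum_mul_le_sqrt_mul_sqrt g c γ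
        _ ≤ (lam * (n * w g)) * Real.sqrt (∑ j ∈ g, γ j ^ 2) :=
            mul_le_mul_of_nonneg_right (hb' g hg) (Real.sqrt_nonneg _)
        _ = lam * ↑n * (w g * Real.sqrt (∑ j ∈ g, γ j ^ 2)) := by ring
    have hQ0 : 0 ≤ ∑ i, (Xt.mulVec γ i) ^ 2 := Finset.sum_nonneg fun i _ => sq_nonneg _
    set S := ∑ j, c j * γ j
    set P := ∑ g ∈ G, w g * Real.sqrt (∑ j ∈ g, γ j ^ 2) with hPdef
    have hP0 : 0 ≤ P := Finset.sum_nonneg fun g hg =>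
      mul_nonneg (hw g hg).le (Real.sqrt_nonneg _)
    have h1 : (1 / (2 * (n:ℝ))) * (-(2 * S) + ∑ i, (Xt.mulVec γ i) ^ 2)
        ≥ (1 / (2 * (n:ℝ))) * (-(2 * (lam * n * P))) := by
      apply mul_le_mul_of_nonneg_left _ (by positivity)
      linarith
    have h2 : (1 / (2 * (n:ℝ))) * (-(2 * (lam * n * P))) = -(lam * P) := by
      field_simp
    linarith [h1, h2.symm]
end
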